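/- arXiv:2303.03810 — 4 statements merged into one kernel-verified Lean document; each statement's English description precedes it below -/
import Mathlib

section
/- Under the assumptions 0 < u < √(gh), the root λ₂(β) of p(λ) = -λ((u-λ)² - gh) + ghβ(λ-u) which tends to 0 as β → 0⁺ satisfies λ₂(β) = β g h u/(gh - u²) + O(β²); equivalently, λ₂(β) = β u/(1 - F_r²) + O(β²) with F_r = u/√(gh). -/
/-!
Writing `A = gh - u²`, the characteristic equation factors as `λ (A + r) = ghu β` with
`r = λ (2u - λ) + ghβ`. Along the branch `λ₂ → 0` the factor `A + r` tends to `A ≠ 0`, so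
`λ₂ = O(β)`, hence `r = O(β)`, and `A λ₂ - ghu β = -λ₂ r = O(β²)`.
-/

open Filter Asymptotics Topology

section PerturbedRoot

variable {α 𝕜 : Type*} [NormedField 𝕜] {l : Filter α} {x y D r : α → 𝕜} {a c : 𝕜}

theorem isBigO_of_mul_eventuallyEq_of_tendsto (h : ∀ᶠ t in l, x t * D t = c * y t)
    (hD : Tendsto D l (𝓝 a)) (ha : a ≠ 0) : x =O[l] y := by
  have hx : x =ᶠ[l] fun t => c * y t * (D t)⁻¹ := by
    filter_upwards [h, hD.eventually_ne ha] with t ht hDt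
    rw [← ht, mul_inv_cancel_right₀ hDt]
  have hinv : (fun t => (D t)⁻¹) =O[l] fun _ => (1 : 𝕜) := (hD.inv₀ ha).isBigO_one 𝕜
  simpa using (((isBigO_refl y l).const_mul_left c).mul hinv).congr' hx.symm EventuallyEq.rfl

theorem sub_mul_div_isBigO_sq_of_mul_add_eventuallyEq (h : ∀ᶠ t in l, x t * (a + r t) = c * y t)
    (ha : a ≠ 0) (hx : x =O[l] y) (hr : r =O[l] y) :
    (fun t => x t - c * y t / a) =O[l] fun t => y t ^ 2 := by
  have hsub : (fun t => a⁻¹ * -(x t * r t)) =ᶠ[l] fun t => x t - c * y t / a := by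
    filter_upwards [h] with t ht
    field_simp
    linear_combination -ht
  simpa only [sq] using ((hx.mul hr).neg_left.const_mul_left a⁻¹).congr' hsub EventuallyEq.rfl

end PerturbedRoot

theorem exner_charPoly_eq_zero_iff (g h u β L : ℝ) :
    -L * ((u - L) ^ 2 - g * h) + g * h * β * (L - u) = 0 ↔
      L * ((g * h - u ^ 2) + (L * (2 * u - L) + g * h * β)) = g * h * u * β := by
  constructor <;> intro hL <;> linear_combination hL

theorem one_sub_div_sqrt_sq {p u : ℝ} (hp : 0 < p) : 1 - (u / Real.sqrt p) ^ 2 = (p - u ^ 2) / p := by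
  rw [div_pow, Real.sq_sqrt hp.le]
  field_simp

theorem exner_lambda2_expansion_general
    (g h u : ℝ)
    (hu : 0 < u) (hsub : u < Real.sqrt (g * h))
    (l₂ : ℝ → ℝ)
    (hroot : ∀ᶠ β in nhdsWithin (0 : ℝ) (Set.Ioi 0),
      -(l₂ β) * ((u - l₂ β) ^ 2 - g * h) + g * h * β * (l₂ β - u) = 0)
    (hcont : Tendsto l₂ (nhdsWithin (0 : ℝ) (Set.Ioi 0)) (nhds 0)) :
    (fun β => l₂ β - β * g * h * u / (g * h - u ^ 2))
      =O[nhdsWithin (0 : ℝ) (Set.Ioi 0)] (fun β => β ^ 2) ∧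
    (fun β => l₂ β - β * u / (1 - (u / Real.sqrt (g * h)) ^ 2))
      =O[nhdsWithin (0 : ℝ) (Set.Ioi 0)] (fun β => β ^ 2) := by
  have hgh : 0 < g * h := Real.sqrt_pos.1 (hu.trans hsub)
  have hA : g * h - u ^ 2 ≠ 0 := by
    nlinarith [Real.sq_sqrt hgh.le, Real.sqrt_nonneg (g * h)]
  have hβ : Tendsto (fun β : ℝ => β) (𝓝[>] 0) (𝓝 0) := tendsto_nhdsWithin_of_tendsto_nhds tendsto_id
  set r : ℝ → ℝ := fun β => l₂ β * (2 * u - l₂ β) + g * h * β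
  have hfactor : ∀ᶠ β in 𝓝[>] 0, l₂ β * ((g * h - u ^ 2) + r β) = g * h * u * β :=
    hroot.mono fun β => (exner_charPoly_eq_zero_iff g h u β (l₂ β)).1
  have hslope : Tendsto (fun β => 2 * u - l₂ β) (𝓝[>] 0) (𝓝 (2 * u)) := by
    simpa using tendsto_const_nhds.sub hcont
  have hr0 : Tendsto r (𝓝[>] 0) (𝓝 0) := by
    simpa using (hcont.mul hslope).add (hβ.const_mul (g * h))
  have hL : l₂ =O[𝓝[>] 0] fun β => β :=
    isBigO_of_mul_eventuallyEq_of_tendsto hfactor (by simpa using hr0.const_add (g * h - u ^ 2)) hA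
  have hr : r =O[𝓝[>] 0] fun β => β := by
    simpa using (hL.mul (hslope.isBigO_one ℝ)).add ((isBigO_refl _ _).const_mul_left (g * h))
  have key := sub_mul_div_isBigO_sq_of_mul_add_eventuallyEq hfactor hA hL hr
  refine ⟨?_, ?_⟩ <;> refine key.congr_left fun β => ?_
  · ring
  · rw [one_sub_div_sqrt_sq hgh]
    field_simp

/-- The root λ₂(β) of p(λ) = -λ((u-λ)² - gh) + ghβ(λ-u) which tends to 0 as β → 0⁺
satisfies λ₂(β) = β g h u/(gh - u²) + O(β²); equivalently λ₂(β) = β u/(1 - F_r²) + O(β²)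
with F_r = u/√(gh). -/
theorem exner_lambda2_expansion
    (g h u : ℝ) (hg : 0 < g) (hh : 0 < h)
    (hu : 0 < u) (hsub : u < Real.sqrt (g * h))
    (l₂ : ℝ → ℝ)
    (hroot : ∀ᶠ β in nhdsWithin (0 : ℝ) (Set.Ioi 0),
      -(l₂ β) * ((u - l₂ β) ^ 2 - g * h) + g * h * β * (l₂ β - u) = 0)
    (hcont : Tendsto l₂ (nhdsWithin (0 : ℝ) (Set.Ioi 0)) (nhds 0)) :
    (fun β => l₂ β - β * g * h * u / (g * h - u ^ 2))
      =O[nhdsWithin (0 : ℝ) (Set.Ioi 0)] (fun β => β ^ 2) ∧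
    (fun β => l₂ β - β * u / (1 - (u / Real.sqrt (g * h)) ^ 2))
      =O[nhdsWithin (0 : ℝ) (Set.Ioi 0)] (fun β => β ^ 2) :=
  exner_lambda2_expansion_general g h u hu hsub l₂ hroot hcont
end

section
/- Under the assumptions 0 < u < √(gh), the root λ₁(β) of p(λ) = -λ((u-λ)² - gh) + ghβ(λ-u) which tends to u - √(gh) as β → 0⁺ satisfies λ₁(β) = u - √(gh) - β√(gh)/(2(1 - F_r)) + O(β²), where F_r = u/√(gh). -/
open Filter Asymptotics Topology

/-!
Writing `c = √(gh)`, `λ₀ = u - c` and `E = λ - λ₀`, the characteristic polynomial factors as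
`p(λ) = E · Q - c³β` with `Q = 2cλ₀ + (2c - λ) E + c²β`. Along the branch, `Q → 2cλ₀ ≠ 0`, so
`E = c³β / Q`; hence first `E = O(β)`, then `Q - 2cλ₀ = O(β)`, and finally
`E - c³β / (2cλ₀) = c³β (2cλ₀ - Q) / (2cλ₀ Q) = O(β²)`.
-/

section PerturbedRoot

variable {α 𝕜 : Type*} [NormedField 𝕜] {l : Filter α} {E Q f : α → 𝕜} {q : 𝕜}

theorem isBigO_sub_div_of_mul_eventuallyEq (hq : q ≠ 0) (hQ : Tendsto Q l (𝓝 q))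
    (h : E * Q =ᶠ[l] f) :
    (fun x => E x - f x / q) =O[l] fun x => f x * (Q x - q) := by
  have hinv : (fun x => (Q x * q)⁻¹) =O[l] fun _ => (1 : 𝕜) :=
    ((hQ.mul_const q).inv₀ (mul_ne_zero hq hq)).isBigO_one 𝕜
  have key : (fun x => E x - f x / q) =ᶠ[l] fun x => -(f x * (Q x - q) * (Q x * q)⁻¹) := by
    filter_upwards [h, hQ.eventually_ne hq] with x hx hQx
    rw [← hx, Pi.mul_apply]
    field_simp
    ring
  refine IsBigO.congr' ?_ key.symm EventuallyEq.rfl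
  simpa using ((isBigO_refl (fun x => f x * (Q x - q)) l).mul hinv).neg_left

theorem isBigO_of_mul_eventuallyEq (hq : q ≠ 0) (hQ : Tendsto Q l (𝓝 q))
    (h : E * Q =ᶠ[l] f) : E =O[l] f := by
  have hsmall : (fun x => f x * (Q x - q)) =O[l] f := by
    simpa using (isBigO_refl f l).mul ((hQ.sub_const q).isBigO_one 𝕜)
  have hdiv : (fun x => f x / q) =O[l] f := by
    simpa [div_eq_inv_mul] using isBigO_const_mul_self q⁻¹ f l
  simpa using ((isBigO_sub_div_of_mul_eventuallyEq hq hQ h).trans hsmall).add hdiv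

end PerturbedRoot

theorem exner_root_expansion {u c : ℝ} (hc : c ≠ 0) (huc : u ≠ c) {l : Filter ℝ}
    (hl : l ≤ 𝓝 0) {x : ℝ → ℝ}
    (hroot : ∀ᶠ β in l, -x β * ((u - x β) ^ 2 - c ^ 2) + c ^ 2 * β * (x β - u) = 0)
    (hx : Tendsto x l (𝓝 (u - c))) :
    (fun β => x β - (u - c) - c ^ 2 * β / (2 * (u - c))) =O[l] fun β => β ^ 2 := by
  set E := fun β => x β - (u - c)
  set Q := fun β => 2 * c * (u - c) + ((2 * c - x β) * E β + c ^ 2 * β)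
  have hq : 2 * c * (u - c) ≠ 0 := mul_ne_zero (mul_ne_zero two_ne_zero hc) (sub_ne_zero.2 huc)
  have hβ : Tendsto (fun β : ℝ => β) l (𝓝 0) := hl
  have hE : Tendsto E l (𝓝 0) := by simpa using hx.sub_const (u - c)
  have hQ : Tendsto Q l (𝓝 (2 * c * (u - c))) := by
    simpa using tendsto_const_nhds.add
      (((tendsto_const_nhds.sub hx).mul hE).add (hβ.const_mul (c ^ 2)))
  have hEQ : E * Q =ᶠ[l] fun β => c ^ 3 * β := by
    filter_upwards [hroot] with β hp
    simp only [Pi.mul_apply, E, Q]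
    linear_combination hp
  have hlin : (fun β => c ^ 3 * β) =O[l] fun β => β := isBigO_const_mul_self _ _ _
  have hEO : E =O[l] fun β => β := (isBigO_of_mul_eventuallyEq hq hQ hEQ).trans hlin
  have hQO : (fun β => Q β - 2 * c * (u - c)) =O[l] fun β => β := by
    have hbdd : (fun β => 2 * c - x β) =O[l] fun _ => (1 : ℝ) :=
      (tendsto_const_nhds.sub hx).isBigO_one ℝ
    simpa [Q] using (hbdd.mul hEO).add (isBigO_const_mul_self (c ^ 2) _ l)
  refine ((isBigO_sub_div_of_mul_eventuallyEq hq hQ hEQ).trans (hlin.mul hQO)).congr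
    (fun β => ?_) fun β => (sq β).symm
  field_simp
  ring

theorem exner_lambda1_expansion_general
    (g h u : ℝ)
    (hu : 0 < u) (hsub : u < Real.sqrt (g * h))
    (l₁ : ℝ → ℝ)
    (hroot : ∀ᶠ β in nhdsWithin (0 : ℝ) (Set.Ioi 0),
      -(l₁ β) * ((u - l₁ β) ^ 2 - g * h) + g * h * β * (l₁ β - u) = 0)
    (hcont : Tendsto l₁ (nhdsWithin (0 : ℝ) (Set.Ioi 0))
      (nhds (u - Real.sqrt (g * h)))) :
    (fun β => l₁ β -
        (u - Real.sqrt (g * h)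
          - β * Real.sqrt (g * h) / (2 * (1 - u / Real.sqrt (g * h)))))
      =O[nhdsWithin (0 : ℝ) (Set.Ioi 0)] (fun β => β ^ 2) := by
  set c := Real.sqrt (g * h)
  have hc : 0 < c := hu.trans hsub
  have hc2 : c ^ 2 = g * h := Real.sq_sqrt (Real.sqrt_pos.1 hc).le
  rw [← hc2] at hroot
  refine (exner_root_expansion hc.ne' hsub.ne nhdsWithin_le_nhds hroot hcont).congr_left
    fun β => ?_
  have huc : u - c ≠ 0 := sub_ne_zero.2 hsub.ne
  have hcu : c - u ≠ 0 := sub_ne_zero.2 hsub.ne'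
  field_simp
  ring

/-- The root λ₁(β) of p(λ) = -λ((u-λ)² - gh) + ghβ(λ-u) which tends to u - √(gh) as
β → 0⁺ satisfies λ₁(β) = u - √(gh) - β√(gh)/(2(1 - F_r)) + O(β²), F_r = u/√(gh). -/
theorem exner_lambda1_expansion
    (g h u : ℝ) (hg : 0 < g) (hh : 0 < h)
    (hu : 0 < u) (hsub : u < Real.sqrt (g * h))
    (l₁ : ℝ → ℝ)
    (hroot : ∀ᶠ β in nhdsWithin (0 : ℝ) (Set.Ioi 0),
      -(l₁ β) * ((u - l₁ β) ^ 2 - g * h) + g * h * β * (l₁ β - u) = 0)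
    (hcont : Tendsto l₁ (nhdsWithin (0 : ℝ) (Set.Ioi 0))
      (nhds (u - Real.sqrt (g * h)))) :
    (fun β => l₁ β -
        (u - Real.sqrt (g * h)
          - β * Real.sqrt (g * h) / (2 * (1 - u / Real.sqrt (g * h)))))
      =O[nhdsWithin (0 : ℝ) (Set.Ioi 0)] (fun β => β ^ 2) :=
  exner_lambda1_expansion_general g h u hu hsub l₁ hroot hcont
end

section
/- Under the assumptions 0 < u < √(gh), the root λ₃(β) of p(λ) = -λ((u-λ)² - gh) + ghβ(λ-u) which tends to u + √(gh) as β → 0⁺ satisfies λ₃(β) = u + √(gh) + β√(gh)/(2(1 + F_r)) + O(β²), where F_r = u/√(gh). -/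
/-!
With `c = √(gh)` the characteristic equation factors as `λ (λ - (u + c)) (λ - u + c) = c² β (λ - u)`,
and `c / (2 (1 + u/c)) = c² / (2 (u + c))`. Solving for `λ - (u + c)` and substituting the
first-order term back in shows that `λ₃ - (u + c + β c² / (2 (u + c)))` is exactly `β²` times a
rational function of `λ₃` that is continuous at `u + c`; since `λ₃ → u + c`, that factor stays
bounded.
-/

open Filter Asymptotics Topology

section Expansion

variable {K : Type*} [Field K] [NeZero (2 : K)]

noncomputable def remainderCoeff (u c x : K) : K :=
  c ^ 4 * (x - u) * (2 * u - x) / (2 * x ^ 2 * (x - u + c) ^ 2 * (u + c))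

lemma sub_firstOrder_eq_sq_mul_remainderCoeff {u c x β : K} (hc : c ≠ 0) (huc : u + c ≠ 0)
    (hx : x ≠ 0) (hxc : x - u + c ≠ 0)
    (hroot : -x * ((u - x) ^ 2 - c ^ 2) + c ^ 2 * β * (x - u) = 0) :
    x - (u + c + β * c / (2 * (1 + u / c))) = β ^ 2 * remainderCoeff u c x := by
  have hslope : c / (2 * (1 + u / c)) = c ^ 2 / (2 * (u + c)) := by
    rw [one_add_div hc, add_comm c u]
    field_simp
  have hden : 2 * x ^ 2 * (x - u + c) ^ 2 * (u + c) ≠ 0 := by simp [two_ne_zero, *]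
  have hcancel : β * (c ^ 2 / (2 * (u + c))) * (2 * (u + c)) = β * c ^ 2 := by
    rw [mul_assoc, div_mul_cancel₀ _ (mul_ne_zero two_ne_zero huc)]
  rw [mul_div_assoc, hslope, remainderCoeff, mul_div_assoc' (β ^ 2), eq_div_iff hden]
  linear_combination (-(2 * (u + c) * x * (x - u + c) + β * c ^ 2 * (2 * u - x))) * hroot
    - x ^ 2 * (x - u + c) ^ 2 * hcancel

end Expansion

theorem exner_lambda3_expansion_general
    (g h u : ℝ) (hg : 0 < g) (hh : 0 < h)
    (hu : 0 < u)
    (l₃ : ℝ → ℝ)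
    (hroot : ∀ᶠ β in nhdsWithin (0 : ℝ) (Set.Ioi 0),
      -(l₃ β) * ((u - l₃ β) ^ 2 - g * h) + g * h * β * (l₃ β - u) = 0)
    (hcont : Tendsto l₃ (nhdsWithin (0 : ℝ) (Set.Ioi 0))
      (nhds (u + Real.sqrt (g * h)))) :
    (fun β => l₃ β -
        (u + Real.sqrt (g * h)
          + β * Real.sqrt (g * h) / (2 * (1 + u / Real.sqrt (g * h)))))
      =O[nhdsWithin (0 : ℝ) (Set.Ioi 0)] (fun β => β ^ 2) := by
  have hgh : 0 < g * h := mul_pos hg hh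
  set c := Real.sqrt (g * h)
  have hc : 0 < c := Real.sqrt_pos.mpr hgh
  have hc2 : c ^ 2 = g * h := Real.sq_sqrt hgh.le
  have hne : ∀ᶠ β in 𝓝[>] 0, l₃ β ≠ 0 ∧ l₃ β - u + c ≠ 0 :=
    (hcont.eventually_ne (by positivity)).and
      (((hcont.sub_const u).add_const c).eventually_ne (by simp; positivity))
  have hexpand : (fun β => l₃ β - (u + c + β * c / (2 * (1 + u / c))))
      =ᶠ[𝓝[>] 0] fun β => β ^ 2 * remainderCoeff u c (l₃ β) := by
    filter_upwards [hroot, hne] with β hβ ⟨hx, hxc⟩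
    exact sub_firstOrder_eq_sq_mul_remainderCoeff hc.ne' (by positivity) hx hxc (hc2 ▸ hβ)
  have hbounded : (fun β => remainderCoeff u c (l₃ β)) =O[𝓝[>] 0] (fun _ => (1 : ℝ)) := by
    have hcontAt : ContinuousAt (remainderCoeff u c) (u + c) :=
      ContinuousAt.div (by fun_prop) (by fun_prop) (by rw [add_sub_cancel_left]; positivity)
    exact (hcontAt.tendsto.comp hcont).isBigO_one ℝ
  exact hexpand.trans_isBigO ((isBigO_refl _ _).mul hbounded |>.congr_right (by simp))

/-- The root λ₃(β) of p(λ) = -λ((u-λ)² - gh) + ghβ(λ-u) which tends to u + √(gh) as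
β → 0⁺ satisfies λ₃(β) = u + √(gh) + β√(gh)/(2(1 + F_r)) + O(β²), F_r = u/√(gh). -/
theorem exner_lambda3_expansion
    (g h u : ℝ) (hg : 0 < g) (hh : 0 < h)
    (hu : 0 < u) (hsub : u < Real.sqrt (g * h))
    (l₃ : ℝ → ℝ)
    (hroot : ∀ᶠ β in nhdsWithin (0 : ℝ) (Set.Ioi 0),
      -(l₃ β) * ((u - l₃ β) ^ 2 - g * h) + g * h * β * (l₃ β - u) = 0)
    (hcont : Tendsto l₃ (nhdsWithin (0 : ℝ) (Set.Ioi 0))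
      (nhds (u + Real.sqrt (g * h)))) :
    (fun β => l₃ β -
        (u + Real.sqrt (g * h)
          + β * Real.sqrt (g * h) / (2 * (1 + u / Real.sqrt (g * h)))))
      =O[nhdsWithin (0 : ℝ) (Set.Ioi 0)] (fun β => β ^ 2) :=
  exner_lambda3_expansion_general g h u hg hh hu l₃ hroot hcont
end

section
/- For subcritical flow 0 < F_r < 1 and small β > 0, the intermediate eigenvalue satisfies λ₂ ≈ βu/(1-F_r²), so that the stiffness ratio λ₃/λ₂ = (u + √(gh))(1-F_r²)/(βu) + O(1) tends to infinity as β → 0⁺; in particular λ₃/λ₂ ≥ (1 - F_r²)(1 + 1/F_r)/β · (1 + o(1)). -/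
/-!
Dividing the characteristic equation by `β` gives `λ₂ / β = g h (λ₂ - u) / ((u - λ₂)² - g h)`,
whose right-hand side tends to `g h u / (g h - u²) = u / (1 - F_r²)` as `λ₂ → 0`; the denominator
stays away from zero precisely because the flow is subcritical. Hence
`β · λ₃ / λ₂ = λ₃ / (λ₂ / β) → (u + √(gh)) (1 - F_r²) / u = (1 - F_r²)(1 + 1 / F_r) > 0`,
and a function `r` with `β · r β` tending to a positive limit tends to infinity like that limit
divided by `β`.
-/

open Filter Asymptotics Topology

/-- The characteristic polynomial in the eigenvalue `x`, with `k` standing for `g h`. -/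
def exnerChar (k u β x : ℝ) : ℝ :=
  -x * ((u - x) ^ 2 - k) + k * β * (x - u)

theorem tendsto_div_of_exnerChar_eq_zero {l : Filter ℝ} {k u : ℝ} {lam : ℝ → ℝ}
    (hku : u ^ 2 ≠ k) (hβ : ∀ᶠ β in l, β ≠ 0)
    (hroot : ∀ᶠ β in l, exnerChar k u β (lam β) = 0) (hlim : Tendsto lam l (𝓝 0)) :
    Tendsto (fun β => lam β / β) l (𝓝 (k * u / (k - u ^ 2))) := by
  have hden : Tendsto (fun β => (u - lam β) ^ 2 - k) l (𝓝 (u ^ 2 - k)) := by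
    simpa using ((tendsto_const_nhds (x := u)).sub hlim).pow 2 |>.sub_const k
  have hden_ne : u ^ 2 - k ≠ 0 := sub_ne_zero.mpr hku
  have hquot : ∀ᶠ β in l, k * (lam β - u) / ((u - lam β) ^ 2 - k) = lam β / β := by
    filter_upwards [hβ, hroot, hden.eventually_ne hden_ne] with β hβ hroot hD
    rw [div_eq_div_iff hD hβ]
    unfold exnerChar at hroot
    linear_combination hroot
  have hlimit : k * (0 - u) / (u ^ 2 - k) = k * u / (k - u ^ 2) := by
    rw [← neg_div_neg_eq]
    ring
  rw [← hlimit]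
  exact ((hlim.sub_const u).const_mul k |>.div hden hden_ne).congr' hquot

theorem tendsto_atTop_of_tendsto_mul_nhdsGT_zero {r : ℝ → ℝ} {C : ℝ}
    (h : Tendsto (fun x => x * r x) (𝓝[>] 0) (𝓝 C)) (hC : 0 < C) :
    Tendsto r (𝓝[>] 0) atTop := by
  refine (h.pos_mul_atTop hC tendsto_inv_nhdsGT_zero).congr' ?_
  filter_upwards [self_mem_nhdsWithin] with x hx
  field_simp [(Set.mem_Ioi.mp hx).ne']

theorem eventually_mul_div_le_of_tendsto_mul {l : Filter ℝ} {r : ℝ → ℝ} {C ε : ℝ}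
    (hx : ∀ᶠ x in l, 0 < x) (h : Tendsto (fun x => x * r x) l (𝓝 C)) (hC : 0 < C)
    (hε : 0 < ε) : ∀ᶠ x in l, (1 - ε) * (C / x) ≤ r x := by
  have hlt : (1 - ε) * C < C := by nlinarith
  filter_upwards [hx, h.eventually_const_lt hlt] with x hx hlt
  rw [← mul_div_assoc, div_le_iff₀ hx]
  linarith

theorem exner_stiffness_ratio_general
    (g h u : ℝ)
    (hu : 0 < u) (hsub : u < Real.sqrt (g * h))
    (Fr : ℝ) (hFr : Fr = u / Real.sqrt (g * h))
    (l₂ l₃ : ℝ → ℝ)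
    (hroot₂ : ∀ᶠ β in nhdsWithin (0 : ℝ) (Set.Ioi 0),
      -(l₂ β) * ((u - l₂ β) ^ 2 - g * h) + g * h * β * (l₂ β - u) = 0)
    (hcont₂ : Tendsto l₂ (nhdsWithin (0 : ℝ) (Set.Ioi 0)) (nhds 0))
    (hcont₃ : Tendsto l₃ (nhdsWithin (0 : ℝ) (Set.Ioi 0))
      (nhds (u + Real.sqrt (g * h)))) :
    Tendsto (fun β => l₂ β / β) (nhdsWithin (0 : ℝ) (Set.Ioi 0))
      (nhds (u / (1 - Fr ^ 2))) ∧
    Tendsto (fun β => l₃ β / l₂ β) (nhdsWithin (0 : ℝ) (Set.Ioi 0)) atTop ∧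
    (∀ ε > (0 : ℝ), ∀ᶠ β in nhdsWithin (0 : ℝ) (Set.Ioi 0),
      (1 - ε) * ((1 - Fr ^ 2) * (1 + 1 / Fr) / β) ≤ l₃ β / l₂ β) := by
  set c := Real.sqrt (g * h)
  have hc : 0 < c := hu.trans hsub
  have hk : 0 < g * h := Real.sqrt_pos.mp hc
  have hc_sq : c ^ 2 = g * h := Real.sq_sqrt hk.le
  have hFr_pos : 0 < Fr := hFr ▸ div_pos hu hc
  have hFr_lt : Fr < 1 := hFr ▸ (div_lt_one hc).mpr hsub
  have hu_sq : u ^ 2 < g * h := hc_sq ▸ pow_lt_pow_left₀ hsub hu.le two_ne_zero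
  have hl₂ : Tendsto (fun β => l₂ β / β) (𝓝[>] 0) (𝓝 (u / (1 - Fr ^ 2))) := by
    have hlimit : g * h * u / (g * h - u ^ 2) = u / (1 - Fr ^ 2) := by
      rw [hFr, div_pow, hc_sq, one_sub_div hk.ne', div_div_eq_mul_div]
      ring
    exact hlimit ▸ tendsto_div_of_exnerChar_eq_zero hu_sq.ne
      (eventually_mem_nhdsWithin.mono fun _ hβ => ne_of_gt hβ) hroot₂ hcont₂
  have hC : 0 < (1 - Fr ^ 2) * (1 + 1 / Fr) := by
    have : Fr ^ 2 < 1 := by nlinarith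
    exact mul_pos (by linarith) (by positivity)
  have hscaled : Tendsto (fun β => β * (l₃ β / l₂ β)) (𝓝[>] 0)
      (𝓝 ((1 - Fr ^ 2) * (1 + 1 / Fr))) := by
    convert hcont₃.div hl₂ (div_pos hu (by nlinarith)).ne' using 1
    · funext β
      rw [Pi.div_apply, div_div_eq_mul_div]
      ring
    · rw [hFr]
      field_simp
  exact ⟨hl₂, tendsto_atTop_of_tendsto_mul_nhdsGT_zero hscaled hC, fun ε hε =>
    eventually_mul_div_le_of_tendsto_mul self_mem_nhdsWithin hscaled hC hε⟩

/-- For subcritical flow 0 < F_r < 1, as β → 0⁺ the intermediate eigenvalue satisfies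
λ₂(β) ≈ βu/(1-F_r²), so the stiffness ratio λ₃/λ₂ tends to infinity; in particular
λ₃(β)/λ₂(β) ≥ (1 - F_r²)(1 + 1/F_r)/β · (1 + o(1)). -/
theorem exner_stiffness_ratio
    (g h u : ℝ) (hg : 0 < g) (hh : 0 < h)
    (hu : 0 < u) (hsub : u < Real.sqrt (g * h))
    (Fr : ℝ) (hFr : Fr = u / Real.sqrt (g * h))
    (l₂ l₃ : ℝ → ℝ)
    (hroot₂ : ∀ᶠ β in nhdsWithin (0 : ℝ) (Set.Ioi 0),
      -(l₂ β) * ((u - l₂ β) ^ 2 - g * h) + g * h * β * (l₂ β - u) = 0)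
    (hcont₂ : Tendsto l₂ (nhdsWithin (0 : ℝ) (Set.Ioi 0)) (nhds 0))
    (hroot₃ : ∀ᶠ β in nhdsWithin (0 : ℝ) (Set.Ioi 0),
      -(l₃ β) * ((u - l₃ β) ^ 2 - g * h) + g * h * β * (l₃ β - u) = 0)
    (hcont₃ : Tendsto l₃ (nhdsWithin (0 : ℝ) (Set.Ioi 0))
      (nhds (u + Real.sqrt (g * h)))) :
    Tendsto (fun β => l₂ β / β) (nhdsWithin (0 : ℝ) (Set.Ioi 0))
      (nhds (u / (1 - Fr ^ 2))) ∧
    Tendsto (fun β => l₃ β / l₂ β) (nhdsWithin (0 : ℝ) (Set.Ioi 0)) atTop ∧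
    (∀ ε > (0 : ℝ), ∀ᶠ β in nhdsWithin (0 : ℝ) (Set.Ioi 0),
      (1 - ε) * ((1 - Fr ^ 2) * (1 + 1 / Fr) / β) ≤ l₃ β / l₂ β) :=
  exner_stiffness_ratio_general g h u hu hsub Fr hFr l₂ l₃ hroot₂ hcont₂ hcont₃
end
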